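/- Let f : X → X be a homeomorphism of a topological space X such that the induced ℤ-action n·x = fⁿ(x) is cocompactly expansive. Then for every integer n ≠ 0, the ℤ-action generated by fⁿ (i.e. m·x = f^{nm}(x)) is cocompactly expansive. -/

import Mathlib

/-!
A ℤ-action generated by `fⁿ` differs from the one generated by `f` only by the finitely many
shifts `fʳ`, `0 ≤ r < |n|`. Refining the cover `𝒰` to the common refinement of its pullbacks
`f⁻ʳ 𝒰` and enlarging `K` by its images under `f^{±r}` absorbs these shifts, so the
expansiveness of `f` transfers to `fⁿ`.
-/

/-- Cocompact expansiveness. -/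
def CocompactlyExpansive {G X : Type*} [TopologicalSpace X] (φ : G → X → X) : Prop :=
  ∃ (𝒰 : Finset (Set X)) (K : Set X),
    (∀ U ∈ 𝒰, IsOpen U) ∧ (∀ x : X, ∃ U ∈ 𝒰, x ∈ U) ∧
    IsCompact K ∧ (∀ x : X, ∃ g : G, ∃ k ∈ K, x = φ g k) ∧
    (∀ x y : X, (∀ g : G, (∃ U ∈ 𝒰, φ g x ∈ U ∧ φ g y ∈ U) ∨ (φ g x ∉ K ∧ φ g y ∉ K)) →
      x = y)

theorem Homeomorph.toEquiv_zpow {X : Type*} [TopologicalSpace X] (f : X ≃ₜ X) (k : ℤ) :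
    (f ^ k).toEquiv = f.toEquiv ^ k :=
  map_zpow ({ toFun := Homeomorph.toEquiv, map_one' := rfl, map_mul' := fun _ _ => rfl } :
    (X ≃ₜ X) →* Equiv.Perm X) f k

theorem Int.exists_eq_mul_add_fin_natAbs {n : ℤ} (hn : n ≠ 0) (k : ℤ) :
    ∃ (q : ℤ) (r : Fin n.natAbs), k = n * q + r :=
  ⟨k / n, ⟨(k % n).toNat, by have := Int.emod_lt k hn; omega⟩, by
    have := Int.emod_nonneg k hn; have := Int.mul_ediv_add_emod k n; simp; omega⟩

section Refinement

variable {X ι : Type*} [Fintype ι]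

open Classical in
noncomputable def Finset.pullbackRefinement (e : ι → X → X) (𝒰 : Finset (Set X)) :
    Finset (Set X) :=
  (Fintype.piFinset fun _ : ι => 𝒰).image fun w => ⋂ i, e i ⁻¹' w i

variable {e : ι → X → X} {𝒰 : Finset (Set X)}

theorem Finset.isOpen_of_mem_pullbackRefinement [TopologicalSpace X] (he : ∀ i, Continuous (e i))
    (h𝒰 : ∀ U ∈ 𝒰, IsOpen U) {V : Set X} (hV : V ∈ 𝒰.pullbackRefinement e) : IsOpen V := by
  classical
  obtain ⟨w, hw, rfl⟩ := Finset.mem_image.mp hV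
  exact isOpen_iInter_of_finite fun i => (h𝒰 _ (Fintype.mem_piFinset.mp hw i)).preimage (he i)

theorem Finset.exists_mem_pullbackRefinement (h𝒰 : ∀ x : X, ∃ U ∈ 𝒰, x ∈ U) (x : X) :
    ∃ V ∈ 𝒰.pullbackRefinement e, x ∈ V := by
  classical
  choose w hw𝒰 hxw using fun i => h𝒰 (e i x)
  exact ⟨_, Finset.mem_image.mpr ⟨w, Fintype.mem_piFinset.mpr hw𝒰, rfl⟩, Set.mem_iInter.mpr hxw⟩

theorem Finset.exists_mapsTo_of_mem_pullbackRefinement {V : Set X}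
    (hV : V ∈ 𝒰.pullbackRefinement e) (i : ι) : ∃ U ∈ 𝒰, Set.MapsTo (e i) V U := by
  classical
  obtain ⟨w, hw, rfl⟩ := Finset.mem_image.mp hV
  exact ⟨w i, Fintype.mem_piFinset.mp hw i, fun x hx => Set.mem_iInter.mp hx i⟩

end Refinement

theorem CocompactlyExpansive.of_finite_shifts {G H X ι : Type*} [TopologicalSpace X]
    [Finite ι] {φ : G → X → X} {ψ : H → X → X} (e : ι → X ≃ₜ X)
    (h_left : ∀ g, ∃ h i, ∀ x, φ g x = e i (ψ h x))
    (h_right : ∀ g, ∃ h i, ∀ x, φ g x = ψ h (e i x)) (hφ : CocompactlyExpansive φ) :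
    CocompactlyExpansive ψ := by
  classical
  have := Fintype.ofFinite ι
  obtain ⟨𝒰, K, h𝒰o, h𝒰c, hK, hKφ, hexp⟩ := hφ
  refine ⟨𝒰.pullbackRefinement (fun i => e i), ⋃ i, (e i '' K ∪ e i ⁻¹' K),
    fun V => Finset.isOpen_of_mem_pullbackRefinement (fun i => (e i).continuous) h𝒰o,
    Finset.exists_mem_pullbackRefinement h𝒰c,
    isCompact_iUnion fun i => (hK.image (e i).continuous).union ((e i).isCompact_preimage.2 hK),
    fun x => ?_, fun x y hxy => hexp x y fun g => ?_⟩
  · obtain ⟨g, k, hk, rfl⟩ := hKφ x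
    obtain ⟨h, i, hg⟩ := h_right g
    exact ⟨h, e i k, Set.mem_iUnion.2 ⟨i, .inl ⟨k, hk, rfl⟩⟩, hg k⟩
  · obtain ⟨h, i, hg⟩ := h_left g
    rw [hg x, hg y]
    rcases hxy h with ⟨V, hV, hxV, hyV⟩ | ⟨hxK, hyK⟩
    · obtain ⟨U, hU, hVU⟩ := Finset.exists_mapsTo_of_mem_pullbackRefinement hV i
      exact .inl ⟨U, hU, hVU hxV, hVU hyV⟩
    · exact .inr ⟨fun hx => hxK (Set.mem_iUnion.2 ⟨i, .inr hx⟩),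
        fun hy => hyK (Set.mem_iUnion.2 ⟨i, .inr hy⟩)⟩

theorem cocompactlyExpansive_power {X : Type*} [TopologicalSpace X] (f : X ≃ₜ X)
    (hce : CocompactlyExpansive (fun (k : ℤ) (x : X) => (f.toEquiv ^ k) x))
    (n : ℤ) (hn : n ≠ 0) :
    CocompactlyExpansive (fun (m : ℤ) (x : X) => (f.toEquiv ^ (n * m)) x) := by
  have hsplit : ∀ k : ℤ, ∃ (q : ℤ) (r : Fin n.natAbs),
      f.toEquiv ^ k = (f ^ (r : ℤ)).toEquiv * f.toEquiv ^ (n * q) ∧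
      f.toEquiv ^ k = f.toEquiv ^ (n * q) * (f ^ (r : ℤ)).toEquiv := by
    intro k
    obtain ⟨q, r, rfl⟩ := Int.exists_eq_mul_add_fin_natAbs hn k
    refine ⟨q, r, ?_, ?_⟩ <;> rw [f.toEquiv_zpow, zpow_add]
    exact (Commute.zpow_zpow_self _ _ _).eq
  refine hce.of_finite_shifts (fun r : Fin n.natAbs => f ^ (r : ℤ)) (fun k => ?_) (fun k => ?_)
  · obtain ⟨q, r, h, -⟩ := hsplit k
    exact ⟨q, r, DFunLike.congr_fun h⟩
  · obtain ⟨q, r, -, h⟩ := hsplit k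
    exact ⟨q, r, DFunLike.congr_fun h⟩
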